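/- Let A be a symmetric m-th order n-dimensional tensor with m even and B positive definite symmetric of the same order and dimension. Then the generalized Rayleigh quotient λ(x) = A x^m / B x^m is a continuous function on the unit sphere, attains its maximum and minimum, and every maximizer/minimizer x* (with the corresponding λ) is a generalized eigenpair: A (x*)^{m-1} = λ B (x*)^{m-1}. -/

import Mathlib

open scoped BigOperators

/-- Contraction of an `(m+1)`-th order, `n`-dimensional tensor with `m` copies of `x`,
yielding the vector `A x^m` (i.e. `A x^{order-1}`). -/
noncomputable def tvec {m n : ℕ} (A : (Fin (m + 1) → Fin n) → ℝ) (x : Fin n → ℝ) :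
    Fin n → ℝ :=
  fun i => ∑ j : Fin m → Fin n, A (Fin.cons i j) * ∏ k, x (j k)

/-- Full contraction of an `m`-th order, `n`-dimensional tensor with `m` copies of `x`. -/
noncomputable def tscal {m n : ℕ} (A : (Fin m → Fin n) → ℝ) (x : Fin n → ℝ) : ℝ :=
  ∑ j : Fin m → Fin n, A j * ∏ k, x (j k)

/-- A tensor is symmetric if invariant under index permutations. -/
def IsSymmT {m n : ℕ} (A : (Fin m → Fin n) → ℝ) : Prop :=
  ∀ (σ : Equiv.Perm (Fin m)) (i : Fin m → Fin n), A (i ∘ σ) = A i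

/-- Euclidean norm on `Fin n → ℝ`. -/
noncomputable def vnorm {n : ℕ} (x : Fin n → ℝ) : ℝ :=
  Real.sqrt (∑ i, x i ^ 2)

/-!
Both contractions are homogeneous of degree `m + 1`, so `λ(y) = A y^(m+1) / B y^(m+1)` is
invariant under `y ↦ c • y` for `c ≠ 0`. An extremum of `λ` on the sphere is therefore a local
extremum of `λ` on `ℝⁿ ∖ {0}`, where `λ` is differentiable, and its derivative vanishes there.
For a symmetric tensor `C` the gradient of `y ↦ C y^(m+1)` is `(m + 1) C y^m`, so the quotient rule
turns `∇λ(x) = 0` into `A x^m = λ(x) B x^m`.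
-/

open Finset

variable {n : ℕ}

lemma vnorm_nonneg (y : Fin n → ℝ) : 0 ≤ vnorm y :=
  Real.sqrt_nonneg _

lemma vnorm_eq_norm (y : Fin n → ℝ) :
    vnorm y = ‖(WithLp.toLp 2 y : EuclideanSpace ℝ (Fin n))‖ := by
  simp [vnorm, EuclideanSpace.norm_eq]

lemma vnorm_smul (c : ℝ) (y : Fin n → ℝ) : vnorm (c • y) = |c| * vnorm y := by
  rw [vnorm_eq_norm, vnorm_eq_norm, WithLp.toLp_smul, norm_smul, Real.norm_eq_abs]

lemma vnorm_eq_zero {y : Fin n → ℝ} : vnorm y = 0 ↔ y = 0 := by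
  rw [vnorm_eq_norm, norm_eq_zero, WithLp.toLp_eq_zero]

lemma ne_zero_of_vnorm_eq_one {y : Fin n → ℝ} (hy : vnorm y = 1) : y ≠ 0 :=
  vnorm_eq_zero.not.1 (hy ▸ one_ne_zero)

lemma isCompact_vnorm_eq_one : IsCompact {y : Fin n → ℝ | vnorm y = 1} := by
  have hS : {y : Fin n → ℝ | vnorm y = 1} =
      (PiLp.homeomorph 2 fun _ : Fin n => ℝ).symm ⁻¹' Metric.sphere 0 1 := by
    ext y
    simp [vnorm_eq_norm, PiLp.homeomorph]
  rw [hS]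
  exact (Homeomorph.isCompact_preimage _).2 (isCompact_sphere 0 1)

lemma nonempty_vnorm_eq_one (hn : 0 < n) : {y : Fin n → ℝ | vnorm y = 1}.Nonempty :=
  ⟨Pi.single ⟨0, hn⟩ 1, by simp [vnorm_eq_norm]⟩

section Homogeneity

variable {p : ℕ}

lemma tscal_smul (C : (Fin p → Fin n) → ℝ) (c : ℝ) (y : Fin n → ℝ) :
    tscal C (c • y) = c ^ p * tscal C y := by
  simp only [tscal, Pi.smul_apply, smul_eq_mul, prod_mul_distrib, prod_const, card_univ,
    Fintype.card_fin, mul_sum]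
  exact sum_congr rfl fun j _ => by ring

lemma continuous_tscal (C : (Fin p → Fin n) → ℝ) : Continuous (tscal C) := by
  unfold tscal
  fun_prop

lemma tscal_div_tscal_smul (A B : (Fin p → Fin n) → ℝ) {c : ℝ} (hc : c ≠ 0)
    (y : Fin n → ℝ) : tscal A (c • y) / tscal B (c • y) = tscal A y / tscal B y := by
  rw [tscal_smul, tscal_smul, mul_div_mul_left _ _ (pow_ne_zero p hc)]

lemma isLocalExtr_of_isExtrOn_vnorm_eq_one {A B : (Fin p → Fin n) → ℝ} {x : Fin n → ℝ}
    (hx : vnorm x = 1) (h : IsExtrOn (fun y => tscal A y / tscal B y) {y | vnorm y = 1} x) :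
    IsLocalExtr (fun y => tscal A y / tscal B y) x := by
  have hx0 := ne_zero_of_vnorm_eq_one hx
  have hmaps : Set.MapsTo (fun y : Fin n → ℝ => (vnorm y)⁻¹ • y) {y | y ≠ 0}
      {y | vnorm y = 1} := fun y hy => by
    simp only [Set.mem_ofPred_eq, vnorm_smul, abs_inv, abs_of_nonneg (vnorm_nonneg y)]
    exact inv_mul_cancel₀ (vnorm_eq_zero.not.2 hy)
  have hext := (h.comp_mapsTo hmaps (by simp only [hx, inv_one, one_smul])).isLocalExtr
    (isOpen_ne.mem_nhds hx0)
  refine IsExtrFilter.congr hext ?_ (by simp only [Function.comp_apply, hx, inv_one, one_smul])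
  filter_upwards [isOpen_ne.mem_nhds hx0] with y hy
  exact tscal_div_tscal_smul A B (inv_ne_zero (vnorm_eq_zero.not.2 hy)) y

end Homogeneity

lemma Fin.univ_erase_eq_map_succAboveEmb {m : ℕ} (k : Fin (m + 1)) :
    (univ : Finset (Fin (m + 1))).erase k = univ.map k.succAboveEmb := by
  rw [Fin.univ_succAbove m k, erase_cons]

section Gradient

variable {m : ℕ} {A B C : (Fin (m + 1) → Fin n) → ℝ}

lemma IsSymmT.sum_mul_prod_erase_mul (hC : IsSymmT C) (x v : Fin n → ℝ) (k : Fin (m + 1)) :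
    ∑ j : Fin (m + 1) → Fin n, C j * ((∏ l ∈ univ.erase k, x (j l)) * v (j k)) =
      ∑ i, tvec C x i * v i := by
  rw [← (Fin.insertNthEquiv (fun _ => Fin n) k).sum_comp, Fintype.sum_prod_type]
  refine sum_congr rfl fun i _ => ?_
  rw [tvec, sum_mul]
  refine sum_congr rfl fun j _ => ?_
  have hperm : C (Fin.insertNth k i j) = C (Fin.cons i j) := by
    rw [← hC k.cycleRange.symm, Fin.insertNth_comp_cycleRange_symm]
  simp only [Fin.insertNthEquiv, Equiv.coe_fn_mk, hperm, Fin.univ_erase_eq_map_succAboveEmb,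
    prod_map, Fin.coe_succAboveEmb, Fin.insertNth_apply_succAbove, Fin.insertNth_apply_same]
  ring

lemma IsSymmT.hasFDerivAt_tscal (hC : IsSymmT C) (x : Fin n → ℝ) :
    HasFDerivAt (tscal C) (((m : ℝ) + 1) •
      ∑ i, tvec C x i • ContinuousLinearMap.proj (R := ℝ) (φ := fun _ : Fin n => ℝ) i) x := by
  have hLeibniz : HasFDerivAt (tscal C) (∑ j : Fin (m + 1) → Fin n, C j •
      ∑ k, (∏ l ∈ univ.erase k, x (j l)) •
        ContinuousLinearMap.proj (R := ℝ) (φ := fun _ : Fin n => ℝ) (j k)) x := by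
    unfold tscal
    refine HasFDerivAt.fun_sum fun j _ => HasFDerivAt.const_mul ?_ (C j)
    exact HasFDerivAt.finsetProd fun k _ => hasFDerivAt_apply (j k) x
  refine hLeibniz.congr_fderiv (ContinuousLinearMap.ext fun v => ?_)
  simp only [FunLike.coe_smul, FunLike.coe_sum, Pi.smul_apply, Finset.sum_apply, smul_eq_mul,
    ContinuousLinearMap.proj_apply, mul_sum]
  rw [sum_comm, ← mul_sum]
  simp only [hC.sum_mul_prod_erase_mul x v, sum_const, card_univ, Fintype.card_fin, nsmul_eq_mul]
  push_cast
  ring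

lemma IsSymmT.tvec_eq_smul_of_isLocalExtr (hA : IsSymmT A) (hB : IsSymmT B) {x : Fin n → ℝ}
    (hBx : tscal B x ≠ 0) (h : IsLocalExtr (fun y => tscal A y / tscal B y) x) :
    tvec A x = (tscal A x / tscal B x) • tvec B x := by
  have hquot := (hA.hasFDerivAt_tscal x).mul ((hasFDerivAt_inv hBx).comp x (hB.hasFDerivAt_tscal x))
  have hcrit := h.hasFDerivAt_eq_zero
    (hquot.congr_of_eventuallyEq (.of_forall fun y => div_eq_mul_inv _ _))
  ext i
  have hi : -(tscal A x * ((m + 1) * (tvec B x i * (tscal B x ^ 2)⁻¹))) +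
      (tscal B x)⁻¹ * ((m + 1) * tvec A x i) = 0 := by
    simpa [Pi.single_apply] using congrArg (fun L => L (Pi.single i 1)) hcrit
  have hm : (m : ℝ) + 1 ≠ 0 := by positivity
  have hi' : tscal B x * tvec A x i = tscal A x * tvec B x i := by
    field_simp at hi
    linarith [(mul_eq_zero.1 (hi.trans (mul_zero _))).resolve_left hm]
  rw [Pi.smul_apply, smul_eq_mul, div_mul_eq_mul_div, eq_div_iff hBx]
  linarith

end Gradient

theorem stmt_17_general {m n : ℕ} (hn : 0 < n)
    (A B : (Fin (m + 1) → Fin n) → ℝ) (hA : IsSymmT A) (hB : IsSymmT B)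
    (hBpos : ∀ y : Fin n → ℝ, y ≠ 0 → 0 < tscal B y) :
    ContinuousOn (fun y : Fin n → ℝ => tscal A y / tscal B y) {y | vnorm y = 1} ∧
    (∃ xmax : Fin n → ℝ, vnorm xmax = 1 ∧
      (∀ y : Fin n → ℝ, vnorm y = 1 →
        tscal A y / tscal B y ≤ tscal A xmax / tscal B xmax)) ∧
    (∃ xmin : Fin n → ℝ, vnorm xmin = 1 ∧
      (∀ y : Fin n → ℝ, vnorm y = 1 →
        tscal A xmin / tscal B xmin ≤ tscal A y / tscal B y)) ∧
    (∀ x : Fin n → ℝ, vnorm x = 1 →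
      ((∀ y : Fin n → ℝ, vnorm y = 1 →
          tscal A y / tscal B y ≤ tscal A x / tscal B x) ∨
        (∀ y : Fin n → ℝ, vnorm y = 1 →
          tscal A x / tscal B x ≤ tscal A y / tscal B y)) →
      tvec A x = (tscal A x / tscal B x) • tvec B x) := by
  have hB0 : ∀ y : Fin n → ℝ, vnorm y = 1 → tscal B y ≠ 0 :=
    fun y hy => (hBpos y (ne_zero_of_vnorm_eq_one hy)).ne'
  have hcont : ContinuousOn (fun y : Fin n → ℝ => tscal A y / tscal B y) {y | vnorm y = 1} :=
    (continuous_tscal A).continuousOn.div (continuous_tscal B).continuousOn hB0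
  obtain ⟨xmax, hxmax, hmax⟩ :=
    isCompact_vnorm_eq_one.exists_isMaxOn (nonempty_vnorm_eq_one hn) hcont
  obtain ⟨xmin, hxmin, hmin⟩ :=
    isCompact_vnorm_eq_one.exists_isMinOn (nonempty_vnorm_eq_one hn) hcont
  refine ⟨hcont, ⟨xmax, hxmax, fun y hy => hmax hy⟩, ⟨xmin, hxmin, fun y hy => hmin hy⟩,
    fun x hx hext => ?_⟩
  exact hA.tvec_eq_smul_of_isLocalExtr hB (hB0 x hx)
    (isLocalExtr_of_isExtrOn_vnorm_eq_one hx hext.symm)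

/-- the generalized Rayleigh quotient `λ(x) = A x^m / B x^m` is continuous
on the unit sphere, attains its maximum and minimum there, and every maximizer or
minimizer yields a generalized eigenpair `A x^{m-1} = λ(x) B x^{m-1}`. -/
theorem stmt_17 {m n : ℕ} (hn : 0 < n) (hmeven : Even (m + 1))
    (A B : (Fin (m + 1) → Fin n) → ℝ) (hA : IsSymmT A) (hB : IsSymmT B)
    (hBpos : ∀ y : Fin n → ℝ, y ≠ 0 → 0 < tscal B y) :
    ContinuousOn (fun y : Fin n → ℝ => tscal A y / tscal B y) {y | vnorm y = 1} ∧
    (∃ xmax : Fin n → ℝ, vnorm xmax = 1 ∧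
      (∀ y : Fin n → ℝ, vnorm y = 1 →
        tscal A y / tscal B y ≤ tscal A xmax / tscal B xmax)) ∧
    (∃ xmin : Fin n → ℝ, vnorm xmin = 1 ∧
      (∀ y : Fin n → ℝ, vnorm y = 1 →
        tscal A xmin / tscal B xmin ≤ tscal A y / tscal B y)) ∧
    (∀ x : Fin n → ℝ, vnorm x = 1 →
      ((∀ y : Fin n → ℝ, vnorm y = 1 →
          tscal A y / tscal B y ≤ tscal A x / tscal B x) ∨
        (∀ y : Fin n → ℝ, vnorm y = 1 →
          tscal A x / tscal B x ≤ tscal A y / tscal B y)) →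
      tvec A x = (tscal A x / tscal B x) • tvec B x) :=
  stmt_17_general hn A B hA hB hBpos
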